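/- arXiv:2405.05157 — 4 statements merged into one kernel-verified Lean document; each statement's English description precedes it below -/
import Mathlib

section
/- Fix dimensions n_x, n_z, p and, for each j ≥ 1, deterministic matrices A_j, B_j ∈ ℝ^{n_x×p}, H_j ∈ ℝ^{n_z×n_x}, E_j, F_j ∈ ℝ^{n_z×n_z}, symmetric invertible matrices Σ^η_j ∈ ℝ^{n_z×n_z}, and scalars γ̄_j, λ̄_j ∈ ℝ. Define Ψ^x_j ∈ ℝ^{p×n_z} and Ψ^v_j ∈ ℝ^{n_z×n_z} recursively by Ψ^x_j = (1 − λ̄_j)[ γ̄_j B_j^T H_j^T − Σ_{i=1}^{j−1} Ψ^x_i (Σ^η_i)^{−1} (γ̄_j H_j A_j Ψ^x_i + E_j Ψ^v_i)^T ] and Ψ^v_j = (1 − λ̄_j)[ F_j^T − Σ_{i=1}^{j−1} Ψ^v_i (Σ^η_i)^{−1} (γ̄_j H_j A_j Ψ^x_i + E_j Ψ^v_i)^T ]. Suppose families of matrices S^x_{k,j} ∈ ℝ^{n_x×n_z} and S^v_{k,j} ∈ ℝ^{n_z×n_z}, defined for 1 ≤ j ≤ k, satisfy S^x_{k,j} =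 (1 − λ̄_j)[ γ̄_j A_k B_j^T H_j^T − Σ_{i=1}^{j−1} S^x_{k,i} (Σ^η_i)^{−1} (γ̄_j H_j S^x_{j,i} + S^v_{j,i})^T ] and S^v_{k,j} = (1 − λ̄_j)[ E_k F_j^T − Σ_{i=1}^{j−1} S^v_{k,i} (Σ^η_i)^{−1} (γ̄_j H_j S^x_{j,i} + S^v_{j,i})^T ]. Then for all 1 ≤ j ≤ k, S^x_{k,j} = A_k Ψ^x_j and S^v_{k,j} = E_k Ψ^v_j. -/
open Matrix Finset

/- Induction on `j`: once `S^x_{j,i}` and `S^v_{j,i}` are known to factor for `i < j`, the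
coupling coefficients in the two recursions coincide, and the recursions for `S^x_{k,·}` and
`S^v_{k,·}` become those for `Ψ^x` and `Ψ^v` multiplied on the left by `A_k` and `E_k`. -/

theorem Matrix.smul_sub_sum_mul_left {ι l m n o q R : Type*} [Fintype m] [Fintype o]
    [Fintype q] [CommRing R] (c : R) (M : Matrix l m R) (P : Matrix m n R)
    (Y : ι → Matrix m o R) (N : ι → Matrix o q R) (Q : ι → Matrix q n R) (s : Finset ι) :
    c • (M * P - ∑ i ∈ s, M * Y i * N i * Q i) = M * (c • (P - ∑ i ∈ s, Y i * N i * Q i)) := by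
  simp only [Matrix.mul_smul, Matrix.mul_sub, Matrix.mul_sum, Matrix.mul_assoc]

theorem filter_coefficient_factorization_general
    {nx nz p : ℕ}
    (A B : ℕ → Matrix (Fin nx) (Fin p) ℝ) (H : ℕ → Matrix (Fin nz) (Fin nx) ℝ)
    (E F : ℕ → Matrix (Fin nz) (Fin nz) ℝ) (Sη : ℕ → Matrix (Fin nz) (Fin nz) ℝ)
    (γbar lbar : ℕ → ℝ)
    (Ψx : ℕ → Matrix (Fin p) (Fin nz) ℝ) (Ψv : ℕ → Matrix (Fin nz) (Fin nz) ℝ)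
    (hΨx : ∀ j, 1 ≤ j →
      Ψx j = (1 - lbar j) •
        (γbar j • ((B j)ᵀ * (H j)ᵀ)
          - ∑ i ∈ Ico 1 j,
              Ψx i * (Sη i)⁻¹ * (γbar j • (H j * A j * Ψx i) + E j * Ψv i)ᵀ))
    (hΨv : ∀ j, 1 ≤ j →
      Ψv j = (1 - lbar j) •
        ((F j)ᵀ
          - ∑ i ∈ Ico 1 j,
              Ψv i * (Sη i)⁻¹ * (γbar j • (H j * A j * Ψx i) + E j * Ψv i)ᵀ))
    (Sx : ℕ → ℕ → Matrix (Fin nx) (Fin nz) ℝ)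
    (Sv : ℕ → ℕ → Matrix (Fin nz) (Fin nz) ℝ)
    (hSx : ∀ k j, 1 ≤ j → j ≤ k →
      Sx k j = (1 - lbar j) •
        (γbar j • (A k * (B j)ᵀ * (H j)ᵀ)
          - ∑ i ∈ Ico 1 j,
              Sx k i * (Sη i)⁻¹ * (γbar j • (H j * Sx j i) + Sv j i)ᵀ))
    (hSv : ∀ k j, 1 ≤ j → j ≤ k →
      Sv k j = (1 - lbar j) •
        (E k * (F j)ᵀ
          - ∑ i ∈ Ico 1 j,
              Sv k i * (Sη i)⁻¹ * (γbar j • (H j * Sx j i) + Sv j i)ᵀ)) :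
    ∀ k j, 1 ≤ j → j ≤ k → Sx k j = A k * Ψx j ∧ Sv k j = E k * Ψv j := by
  intro k j
  induction j using Nat.strong_induction_on generalizing k with
  | _ j IH =>
    intro hj hjk
    have factor : ∀ k', j ≤ k' → ∀ i ∈ Ico 1 j, Sx k' i = A k' * Ψx i ∧ Sv k' i = E k' * Ψv i :=
      fun k' hk' i hi => IH i (mem_Ico.1 hi).2 k' (mem_Ico.1 hi).1 ((mem_Ico.1 hi).2.le.trans hk')
    have coupling : ∀ i ∈ Ico 1 j,
        γbar j • (H j * Sx j i) + Sv j i = γbar j • (H j * A j * Ψx i) + E j * Ψv i := by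
      intro i hi
      rw [(factor j le_rfl i hi).1, (factor j le_rfl i hi).2, Matrix.mul_assoc]
    constructor
    · rw [hSx k j hj hjk, hΨx j hj, ← smul_sub_sum_mul_left]
      congr 2
      · rw [Matrix.mul_smul, Matrix.mul_assoc]
      · refine sum_congr rfl fun i hi => ?_
        rw [(factor k hjk i hi).1, coupling i hi]
    · rw [hSv k j hj hjk, hΨv j hj, ← smul_sub_sum_mul_left]
      congr 2
      refine sum_congr rfl fun i hi => ?_
      rw [(factor k hjk i hi).2, coupling i hi]

/-- The cross-covariance coefficient families `S^x_{k,j}`, `S^v_{k,j}` satisfying the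
stated recursions factorize through the signal and noise covariance factors:
`S^x_{k,j} = A_k Ψ^x_j` and `S^v_{k,j} = E_k Ψ^v_j` for all `1 ≤ j ≤ k`. -/
theorem filter_coefficient_factorization
    {nx nz p : ℕ}
    (A B : ℕ → Matrix (Fin nx) (Fin p) ℝ) (H : ℕ → Matrix (Fin nz) (Fin nx) ℝ)
    (E F : ℕ → Matrix (Fin nz) (Fin nz) ℝ) (Sη : ℕ → Matrix (Fin nz) (Fin nz) ℝ)
    (hsym : ∀ j, (Sη j)ᵀ = Sη j) (hinv : ∀ j, IsUnit (Sη j))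
    (γbar lbar : ℕ → ℝ)
    (Ψx : ℕ → Matrix (Fin p) (Fin nz) ℝ) (Ψv : ℕ → Matrix (Fin nz) (Fin nz) ℝ)
    (hΨx : ∀ j, 1 ≤ j →
      Ψx j = (1 - lbar j) •
        (γbar j • ((B j)ᵀ * (H j)ᵀ)
          - ∑ i ∈ Ico 1 j,
              Ψx i * (Sη i)⁻¹ * (γbar j • (H j * A j * Ψx i) + E j * Ψv i)ᵀ))
    (hΨv : ∀ j, 1 ≤ j →
      Ψv j = (1 - lbar j) •
        ((F j)ᵀ
          - ∑ i ∈ Ico 1 j,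
              Ψv i * (Sη i)⁻¹ * (γbar j • (H j * A j * Ψx i) + E j * Ψv i)ᵀ))
    (Sx : ℕ → ℕ → Matrix (Fin nx) (Fin nz) ℝ)
    (Sv : ℕ → ℕ → Matrix (Fin nz) (Fin nz) ℝ)
    (hSx : ∀ k j, 1 ≤ j → j ≤ k →
      Sx k j = (1 - lbar j) •
        (γbar j • (A k * (B j)ᵀ * (H j)ᵀ)
          - ∑ i ∈ Ico 1 j,
              Sx k i * (Sη i)⁻¹ * (γbar j • (H j * Sx j i) + Sv j i)ᵀ))
    (hSv : ∀ k j, 1 ≤ j → j ≤ k →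
      Sv k j = (1 - lbar j) •
        (E k * (F j)ᵀ
          - ∑ i ∈ Ico 1 j,
              Sv k i * (Sη i)⁻¹ * (γbar j • (H j * Sx j i) + Sv j i)ᵀ)) :
    ∀ k j, 1 ≤ j → j ≤ k → Sx k j = A k * Ψx j ∧ Sv k j = E k * Ψv j :=
  filter_coefficient_factorization_general A B H E F Sη γbar lbar Ψx Ψv hΨx hΨv Sx Sv hSx hSv
end

section
/- Fix k ≥ 1 and, in addition to the data of the filtering recursions, set Δ^x_L = γ̄_L H_L A_L and Δ^v_L = E_L. Suppose a family of matrices S^x_{k,L} ∈ ℝ^{n_x×n_z} satisfies S^x_{k,i} = A_k Ψ^x_i for 1 ≤ i ≤ k and, for every L > k, S^x_{k,L} = (1 − λ̄_L)[ B_k (Δ^x_L)^T − Σ_{i=1}^{L−1} S^x_{k,i} (Σ^η_i)^{−1} (Δ^x_L Ψ^x_i + Δ^v_L Ψ^v_i)^T ]. Define M^a_{k,L} = Σ_{i=1}^{L} S^x_{k,i} (Σ^η_i)^{−1} (Ψ^a_i)^T for a ∈ {x, v}. Then: (i) M^a_{k,k} = A_k T^{xa}_k, where T^{xa}_k = Σ_{j=1}^{k}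 Ψ^x_j (Σ^η_j)^{−1} (Ψ^a_j)^T; (ii) for every L > k, S^x_{k,L} = (1 − λ̄_L)[ (B_k − M^x_{k,L−1}) (Δ^x_L)^T − M^v_{k,L−1} (Δ^v_L)^T ]; and (iii) for every L > k, M^a_{k,L} = M^a_{k,L−1} + S^x_{k,L} (Σ^η_L)^{−1} (Ψ^a_L)^T. -/
open Matrix Finset

theorem Matrix.sum_mul_transpose_mul_add_mul {ι l m n o q R : Type*} [CommSemiring R]
    [Fintype l] [Fintype n] [Fintype o] [Fintype q] (s : Finset ι) (G : ι → Matrix m n R)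
    (X : ι → Matrix o n R) (Y : ι → Matrix q n R) (D : Matrix l o R) (D' : Matrix l q R) :
    ∑ i ∈ s, G i * (D * X i + D' * Y i)ᵀ
      = (∑ i ∈ s, G i * (X i)ᵀ) * Dᵀ + (∑ i ∈ s, G i * (Y i)ᵀ) * D'ᵀ := by
  simp only [Matrix.sum_mul, ← sum_add_distrib, transpose_add, transpose_mul,
    Matrix.mul_add, Matrix.mul_assoc]

theorem smoother_recursion_general
    {nx nz p : ℕ} (k : ℕ)
    (A B : ℕ → Matrix (Fin nx) (Fin p) ℝ) (H : ℕ → Matrix (Fin nz) (Fin nx) ℝ)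
    (E : ℕ → Matrix (Fin nz) (Fin nz) ℝ) (Sη : ℕ → Matrix (Fin nz) (Fin nz) ℝ)
    (γbar lbar : ℕ → ℝ)
    (Ψx : ℕ → Matrix (Fin p) (Fin nz) ℝ) (Ψv : ℕ → Matrix (Fin nz) (Fin nz) ℝ)
    (S : ℕ → Matrix (Fin nx) (Fin nz) ℝ)
    (hSfil : ∀ i, 1 ≤ i → i ≤ k → S i = A k * Ψx i)
    (hSrec : ∀ L, k < L →
      S L = (1 - lbar L) •
        (B k * (γbar L • (H L * A L))ᵀ
          - ∑ i ∈ Ico 1 L,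
              S i * (Sη i)⁻¹ * ((γbar L • (H L * A L)) * Ψx i + E L * Ψv i)ᵀ))
    (Mx : ℕ → Matrix (Fin nx) (Fin p) ℝ) (Mv : ℕ → Matrix (Fin nx) (Fin nz) ℝ)
    (hMx : ∀ L, Mx L = ∑ i ∈ Icc 1 L, S i * (Sη i)⁻¹ * (Ψx i)ᵀ)
    (hMv : ∀ L, Mv L = ∑ i ∈ Icc 1 L, S i * (Sη i)⁻¹ * (Ψv i)ᵀ) :
    (Mx k = A k * ∑ j ∈ Icc 1 k, Ψx j * (Sη j)⁻¹ * (Ψx j)ᵀ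
      ∧ Mv k = A k * ∑ j ∈ Icc 1 k, Ψx j * (Sη j)⁻¹ * (Ψv j)ᵀ)
    ∧ (∀ L, k < L →
        S L = (1 - lbar L) •
          ((B k - Mx (L - 1)) * (γbar L • (H L * A L))ᵀ - Mv (L - 1) * (E L)ᵀ))
    ∧ (∀ L, k < L →
        Mx L = Mx (L - 1) + S L * (Sη L)⁻¹ * (Ψx L)ᵀ
          ∧ Mv L = Mv (L - 1) + S L * (Sη L)⁻¹ * (Ψv L)ᵀ) := by
  have initial_block : ∀ {m : ℕ} (Ψ : ℕ → Matrix (Fin m) (Fin nz) ℝ),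
      ∑ i ∈ Icc 1 k, S i * (Sη i)⁻¹ * (Ψ i)ᵀ
        = A k * ∑ i ∈ Icc 1 k, Ψx i * (Sη i)⁻¹ * (Ψ i)ᵀ := by
    intro m Ψ
    rw [Matrix.mul_sum]
    refine sum_congr rfl fun i hi => ?_
    rw [hSfil i (mem_Icc.1 hi).1 (mem_Icc.1 hi).2]
    simp only [Matrix.mul_assoc]
  refine ⟨⟨(hMx k).trans (initial_block Ψx), (hMv k).trans (initial_block Ψv)⟩,
    fun L hL => ?_, fun L hL => ?_⟩
  · rw [hSrec L hL, sum_mul_transpose_mul_add_mul,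
      ← Icc_sub_one_right_eq_Ico_of_not_isMin (not_isMin_of_lt hL), ← hMx, ← hMv,
      Matrix.sub_mul, sub_sub]
  · obtain ⟨L, rfl⟩ : ∃ L', L = L' + 1 := ⟨L - 1, by omega⟩
    simp only [hMx, hMv, Nat.add_sub_cancel, sum_Icc_succ_top (Nat.le_add_left 1 L), and_self]

/-- Algebraic content of the fixed-point smoothing algorithm. For a fixed `k ≥ 1`,
with `Δ^x_L = γ̄_L H_L A_L`, `Δ^v_L = E_L`, a family `S_L = S^x_{k,L}` satisfying
`S_i = A_k Ψ^x_i` for `1 ≤ i ≤ k` and the stated recursion for `L > k`, and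
`M^a_{k,L} = ∑_{i=1}^{L} S_i (Σ^η_i)⁻¹ (Ψ^a_i)ᵀ`:
(i) `M^a_{k,k} = A_k T^{xa}_k`;
(ii) for `L > k`, `S_L = (1 - λ̄_L)[(B_k - M^x_{k,L-1})(Δ^x_L)ᵀ - M^v_{k,L-1}(Δ^v_L)ᵀ]`;
(iii) for `L > k`, `M^a_{k,L} = M^a_{k,L-1} + S_L (Σ^η_L)⁻¹ (Ψ^a_L)ᵀ`. -/
theorem smoother_recursion
    {nx nz p : ℕ} (k : ℕ) (hk : 1 ≤ k)
    (A B : ℕ → Matrix (Fin nx) (Fin p) ℝ) (H : ℕ → Matrix (Fin nz) (Fin nx) ℝ)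
    (E F : ℕ → Matrix (Fin nz) (Fin nz) ℝ) (Sη : ℕ → Matrix (Fin nz) (Fin nz) ℝ)
    (hsym : ∀ j, (Sη j)ᵀ = Sη j) (hinv : ∀ j, IsUnit (Sη j))
    (γbar lbar : ℕ → ℝ)
    (Ψx : ℕ → Matrix (Fin p) (Fin nz) ℝ) (Ψv : ℕ → Matrix (Fin nz) (Fin nz) ℝ)
    (hΨx : ∀ j, 1 ≤ j →
      Ψx j = (1 - lbar j) •
        (γbar j • ((B j)ᵀ * (H j)ᵀ)
          - ∑ i ∈ Ico 1 j,
              Ψx i * (Sη i)⁻¹ * (γbar j • (H j * A j * Ψx i) + E j * Ψv i)ᵀ))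
    (hΨv : ∀ j, 1 ≤ j →
      Ψv j = (1 - lbar j) •
        ((F j)ᵀ
          - ∑ i ∈ Ico 1 j,
              Ψv i * (Sη i)⁻¹ * (γbar j • (H j * A j * Ψx i) + E j * Ψv i)ᵀ))
    (S : ℕ → Matrix (Fin nx) (Fin nz) ℝ)
    (hSfil : ∀ i, 1 ≤ i → i ≤ k → S i = A k * Ψx i)
    (hSrec : ∀ L, k < L →
      S L = (1 - lbar L) •
        (B k * (γbar L • (H L * A L))ᵀ
          - ∑ i ∈ Ico 1 L,
              S i * (Sη i)⁻¹ * ((γbar L • (H L * A L)) * Ψx i + E L * Ψv i)ᵀ))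
    (Mx : ℕ → Matrix (Fin nx) (Fin p) ℝ) (Mv : ℕ → Matrix (Fin nx) (Fin nz) ℝ)
    (hMx : ∀ L, Mx L = ∑ i ∈ Icc 1 L, S i * (Sη i)⁻¹ * (Ψx i)ᵀ)
    (hMv : ∀ L, Mv L = ∑ i ∈ Icc 1 L, S i * (Sη i)⁻¹ * (Ψv i)ᵀ) :
    (Mx k = A k * ∑ j ∈ Icc 1 k, Ψx j * (Sη j)⁻¹ * (Ψx j)ᵀ
      ∧ Mv k = A k * ∑ j ∈ Icc 1 k, Ψx j * (Sη j)⁻¹ * (Ψv j)ᵀ)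
    ∧ (∀ L, k < L →
        S L = (1 - lbar L) •
          ((B k - Mx (L - 1)) * (γbar L • (H L * A L))ᵀ - Mv (L - 1) * (E L)ᵀ))
    ∧ (∀ L, k < L →
        Mx L = Mx (L - 1) + S L * (Sη L)⁻¹ * (Ψx L)ᵀ
          ∧ Mv L = Mv (L - 1) + S L * (Sη L)⁻¹ * (Ψv L)ᵀ) :=
  smoother_recursion_general k A B H E Sη γbar lbar Ψx Ψv S hSfil hSrec Mx Mv hMx hMv
end

section
/- Let (Ω, F, P) be a probability space and G ⊆ F a sub-σ-algebra. Let z, w be square-integrable real random variables with E[w] = 0, and let λ be a Bernoulli random variable with mean λ̄ which is independent of the σ-algebra generated by G together with z and w; assume also that w is independent of G. Let S be a closed linear subspace of L²(Ω, F, P) all of whose elements are G-measurable. Then the orthogonal projection of y := (1 − λ) z + λ w onto S equals (1 − λ̄) times the orthogonal projection of z onto S. -/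
/-!
Against a `G`-measurable `f ∈ K` one has `E[f w] = 0`, because `w` is independent of `G`, and
`E[λ f (w - z)] = λ̄ E[f (w - z)]`, because `λ` is independent of `G ∨ σ(z, w)`. Hence
`⟪f, y⟫ = (1 - λ̄) ⟪f, z⟫` for all `f ∈ K`, i.e. `y - (1 - λ̄) z ⊥ K`.

Since `λ` is not assumed measurable, the factorisation of `E[λ g]` first needs `λ` to be
a.e. measurable when `g` is not a.e. zero: `{λ = 1}` is independent of `{g ≠ 0}` and its trace
on that set is the null-measurable set `{λ g ≠ 0}`, which forces the outer measures of
`{λ = 1}` and its complement to add up to `1`.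
-/

open MeasureTheory ProbabilityTheory

namespace MeasureTheory

variable {Ω : Type*} {mΩ : MeasurableSpace Ω} {μ : Measure Ω}

theorem nullMeasurableSet_of_measure_add_measure_compl_le [IsFiniteMeasure μ] {s : Set Ω}
    (h : μ s + μ sᶜ ≤ μ Set.univ) : NullMeasurableSet s μ := by
  set T := toMeasurable μ s
  set T' := toMeasurable μ sᶜ
  have hcover : T ∪ T' = Set.univ :=
    Set.eq_univ_of_forall fun ω ↦ (em (ω ∈ s)).imp (subset_toMeasurable μ s ·)
      (subset_toMeasurable μ sᶜ ·)
  have hoverlap : μ (T ∩ T') = 0 := by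
    have h' := measure_union_add_inter (μ := μ) T (measurableSet_toMeasurable μ sᶜ)
    rw [hcover, measure_toMeasurable, measure_toMeasurable] at h'
    have : μ Set.univ + μ (T ∩ T') ≤ μ Set.univ + 0 := by rw [add_zero, h']; exact h
    exact le_antisymm ((ENNReal.add_le_add_iff_left (measure_ne_top μ _)).mp this) bot_le
  refine (measurableSet_toMeasurable μ s).nullMeasurableSet.congr (ae_eq_set.mpr ⟨?_, ?_⟩)
  · have hsub : T \ s ⊆ T ∩ T' := fun _ ⟨hT, hs⟩ ↦ ⟨hT, subset_toMeasurable μ sᶜ hs⟩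
    exact measure_mono_null hsub hoverlap
  · rw [Set.sdiff_eq_empty.mpr (subset_toMeasurable μ s), measure_empty]

theorem L2.inner_toLp_eq_integral_mul {φ ψ : Ω → ℝ} (hφ : MemLp φ 2 μ) {f : Lp ℝ 2 μ}
    (hf : f =ᵐ[μ] ψ) : inner ℝ f (hφ.toLp φ) = ∫ ω, ψ ω * φ ω ∂μ := by
  rw [L2.inner_def]
  refine integral_congr_ae ?_
  filter_upwards [hφ.coeFn_toLp, hf] with ω hφω hfω
  simp [hφω, hfω, mul_comm]

end MeasureTheory

namespace ProbabilityTheory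

variable {Ω : Type*} {m₁ m₂ mΩ : MeasurableSpace Ω} {μ : Measure Ω} [IsProbabilityMeasure μ]

theorem Indep.nullMeasurableSet_of_inter (h : Indep m₁ m₂ μ)
    {A B : Set Ω} (hA : MeasurableSet[m₁] A) (hB : MeasurableSet[m₂] B) (hB₀ : μ B ≠ 0)
    (hAB : NullMeasurableSet (A ∩ B) μ) : NullMeasurableSet A μ := by
  have hsplit : μ (A ∩ B) + μ (Aᶜ ∩ B) = μ B := by
    rw [add_comm, ← measure_union₀ hAB, ← Set.union_inter_distrib_right, Set.compl_union_self,
      Set.univ_inter]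
    exact (disjoint_compl_left.mono Set.inter_subset_left Set.inter_subset_left).aedisjoint
  rw [(Indep_iff _ _ _).mp h A B hA hB, (Indep_iff _ _ _).mp h Aᶜ B hA.compl hB,
    ← add_mul] at hsplit
  refine nullMeasurableSet_of_measure_add_measure_compl_le (le_of_eq ?_)
  rw [measure_univ]
  exact (ENNReal.mul_eq_right hB₀ (measure_ne_top μ B)).mp hsplit

theorem aestronglyMeasurable_of_indep_of_mul {lam g : Ω → ℝ}
    (hlam : ∀ ω, lam ω = 0 ∨ lam ω = 1)
    (hind : Indep (MeasurableSpace.comap lam inferInstance) m₂ μ) (hgm : Measurable[m₂] g)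
    (hlamg : AEStronglyMeasurable (lam * g) μ) (hg₀ : ¬ g =ᵐ[μ] 0) :
    AEStronglyMeasurable lam μ := by
  set A := lam ⁻¹' {1}
  have hlam_eq : lam = A.indicator 1 := by
    ext ω
    rcases hlam ω with h | h <;> simp [A, h]
  have hAB : A ∩ {ω | g ω ≠ 0} = {ω | (lam * g) ω ≠ 0} := by
    ext ω
    rcases hlam ω with h | h <;> simp [A, h]
  have hB₀ : μ {ω | g ω ≠ 0} ≠ 0 := fun h ↦ hg₀ (ae_iff.mpr h)
  have hA : NullMeasurableSet A μ :=
    hind.nullMeasurableSet_of_inter ⟨{1}, measurableSet_singleton 1, rfl⟩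
      (hgm (measurableSet_singleton 0).compl) hB₀
      (hAB ▸ hlamg.aemeasurable.nullMeasurableSet_preimage (measurableSet_singleton 0).compl)
  rw [hlam_eq]
  exact aestronglyMeasurable_const.indicator₀ hA

theorem integral_mul_eq_mul_integral_of_indep {lam g : Ω → ℝ}
    (hlam : ∀ ω, lam ω = 0 ∨ lam ω = 1)
    (hind : Indep (MeasurableSpace.comap lam inferInstance) m₂ μ) (hgm : Measurable[m₂] g)
    (hg : AEStronglyMeasurable g μ) (hlamg : AEStronglyMeasurable (lam * g) μ) :
    ∫ ω, lam ω * g ω ∂μ = (∫ ω, lam ω ∂μ) * ∫ ω, g ω ∂μ := by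
  by_cases hg₀ : g =ᵐ[μ] 0
  · have hlamg₀ : lam * g =ᵐ[μ] 0 := by
      filter_upwards [hg₀] with ω hω
      simp [hω]
    rw [integral_congr_ae hg₀, ← Pi.mul_def, integral_congr_ae hlamg₀]
    simp
  have hindep : IndepFun lam g μ :=
    indep_of_indep_of_le_right hind (measurable_iff_comap_le.mp hgm)
  exact hindep.integral_mul_eq_mul_integral
    (aestronglyMeasurable_of_indep_of_mul hlam hind hgm hlamg hg₀) hg

end ProbabilityTheory

theorem Submodule.orthogonalProjectionOnto_eq_smul_of_inner_eq {𝕜 E : Type*} [RCLike 𝕜]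
    [NormedAddCommGroup E] [InnerProductSpace 𝕜 E] (K : Submodule 𝕜 E)
    [K.HasOrthogonalProjection] {x y : E} {c : 𝕜}
    (h : ∀ u ∈ K, inner 𝕜 u x = c * inner 𝕜 u y) :
    K.orthogonalProjectionOnto x = c • K.orthogonalProjectionOnto y := by
  have hperp : x - c • y ∈ Kᗮ := fun u hu ↦ by
    rw [inner_sub_right, inner_smul_right, h u hu, sub_self]
  rw [← sub_eq_zero, ← map_smul, ← map_sub, K.orthogonalProjectionOnto_eq_zero_iff]
  exact hperp

theorem integral_mul_attacked_eq {Ω : Type*} {G m mΩ : MeasurableSpace Ω}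
    {μ : Measure Ω} [IsProbabilityMeasure μ] {z w lam f : Ω → ℝ}
    (hz : MemLp z 2 μ) (hw : MemLp w 2 μ) (hwmean : ∫ ω, w ω ∂μ = 0)
    (hber : ∀ ω, lam ω = 0 ∨ lam ω = 1)
    (hlam_indep : Indep (MeasurableSpace.comap lam inferInstance) m μ)
    (hGm : G ≤ m) (hzm : Measurable[m] z) (hwm : Measurable[m] w)
    (hw_G : Indep (MeasurableSpace.comap w inferInstance) G μ)
    (hy : MemLp (fun ω => (1 - lam ω) * z ω + lam ω * w ω) 2 μ)
    (hfG : Measurable[G] f) (hf : MemLp f 2 μ) :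
    ∫ ω, f ω * ((1 - lam ω) * z ω + lam ω * w ω) ∂μ
      = (1 - ∫ ω, lam ω ∂μ) * ∫ ω, f ω * z ω ∂μ := by
  have hfw_zero : ∫ ω, f ω * w ω ∂μ = 0 := by
    have hindep : IndepFun f w μ :=
      (indep_of_indep_of_le_right hw_G (measurable_iff_comap_le.mp hfG)).symm
    rw [← Pi.mul_def, hindep.integral_mul_eq_mul_integral hf.aestronglyMeasurable
      hw.aestronglyMeasurable, hwmean, mul_zero]
  have hfz_int : Integrable (fun ω => f ω * z ω) μ := hf.integrable_mul hz
  have hfw_int : Integrable (fun ω => f ω * w ω) μ := hf.integrable_mul hw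
  have hlam_int : Integrable (fun ω => lam ω * (f ω * (w ω - z ω))) μ :=
    (hf.integrable_mul (hy.sub hz)).congr <| ae_of_all _ fun ω ↦ by
      simp only [Pi.mul_apply, Pi.sub_apply]
      ring
  have hlam : ∫ ω, lam ω * (f ω * (w ω - z ω)) ∂μ
      = (∫ ω, lam ω ∂μ) * ∫ ω, f ω * (w ω - z ω) ∂μ :=
    integral_mul_eq_mul_integral_of_indep hber hlam_indep
      ((hfG.mono hGm le_rfl).mul (hwm.sub hzm))
      (hf.aestronglyMeasurable.mul (hw.sub hz).aestronglyMeasurable) hlam_int.aestronglyMeasurable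
  calc ∫ ω, f ω * ((1 - lam ω) * z ω + lam ω * w ω) ∂μ
      = ∫ ω, f ω * z ω ∂μ + ∫ ω, lam ω * (f ω * (w ω - z ω)) ∂μ := by
        rw [← integral_add hfz_int hlam_int]
        congr 1 with ω
        ring
    _ = ∫ ω, f ω * z ω ∂μ
        + (∫ ω, lam ω ∂μ) * (∫ ω, f ω * w ω ∂μ - ∫ ω, f ω * z ω ∂μ) := by
        rw [hlam, ← integral_sub hfw_int hfz_int]
        simp only [mul_sub]
    _ = (1 - ∫ ω, lam ω ∂μ) * ∫ ω, f ω * z ω ∂μ := by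
        rw [hfw_zero]
        ring

theorem projection_attacked_observation_general
    {Ω : Type*} [mΩ : MeasurableSpace Ω] (μ : Measure Ω) [IsProbabilityMeasure μ]
    (G : MeasurableSpace Ω)
    (z w lam : Ω → ℝ) (lbar : ℝ)
    (hz : MemLp z 2 μ) (hw : MemLp w 2 μ)
    (hwmean : ∫ ω, w ω ∂μ = 0)
    (hber : ∀ ω, lam ω = 0 ∨ lam ω = 1)
    (hlmean : ∫ ω, lam ω ∂μ = lbar)
    (hlam_indep : Indep (MeasurableSpace.comap lam inferInstance)
      (G ⊔ MeasurableSpace.comap z inferInstance ⊔ MeasurableSpace.comap w inferInstance) μ)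
    (hw_G : Indep (MeasurableSpace.comap w inferInstance) G μ)
    (K : Submodule ℝ (Lp ℝ 2 μ)) [CompleteSpace K]
    (hK : ∀ f ∈ K, AEStronglyMeasurable[G] (f : Ω → ℝ) μ)
    (hy : MemLp (fun ω => (1 - lam ω) * z ω + lam ω * w ω) 2 μ) :
    Submodule.orthogonalProjectionOnto K (hy.toLp _)
      = (1 - lbar) • Submodule.orthogonalProjectionOnto K (hz.toLp z) := by
  refine K.orthogonalProjectionOnto_eq_smul_of_inner_eq fun f hf ↦ ?_
  obtain ⟨f', hf'G, hff'⟩ := hK f hf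
  rw [L2.inner_toLp_eq_integral_mul hy hff', L2.inner_toLp_eq_integral_mul hz hff', ← hlmean]
  exact integral_mul_attacked_eq hz hw hwmean hber hlam_indep (le_sup_left.trans le_sup_left)
    (measurable_iff_comap_le.mpr (le_sup_right.trans le_sup_left))
    (measurable_iff_comap_le.mpr le_sup_right) hw_G hy hf'G.measurable ((Lp.memLp f).ae_eq hff')

/-- Let `G ⊆ F` be a sub-σ-algebra, `z`, `w` square-integrable with `E[w] = 0`, and `λ`
a Bernoulli variable with mean `λ̄` independent of the σ-algebra generated by `G`
together with `z` and `w`; let `w` be independent of `G`. For every closed linear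
subspace `K` of `L²` all of whose elements are `G`-measurable, the orthogonal
projection of `y = (1 - λ) z + λ w` onto `K` equals `(1 - λ̄)` times the orthogonal
projection of `z` onto `K`. -/
theorem projection_attacked_observation
    {Ω : Type*} [mΩ : MeasurableSpace Ω] (μ : Measure Ω) [IsProbabilityMeasure μ]
    (G : MeasurableSpace Ω) (hG : G ≤ mΩ)
    (z w lam : Ω → ℝ) (lbar : ℝ)
    (hz : MemLp z 2 μ) (hw : MemLp w 2 μ)
    (hwmean : ∫ ω, w ω ∂μ = 0)
    (hber : ∀ ω, lam ω = 0 ∨ lam ω = 1)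
    (hlmean : ∫ ω, lam ω ∂μ = lbar)
    (hlam_indep : Indep (MeasurableSpace.comap lam inferInstance)
      (G ⊔ MeasurableSpace.comap z inferInstance ⊔ MeasurableSpace.comap w inferInstance) μ)
    (hw_G : Indep (MeasurableSpace.comap w inferInstance) G μ)
    (K : Submodule ℝ (Lp ℝ 2 μ)) [CompleteSpace K]
    (hK : ∀ f ∈ K, AEStronglyMeasurable[G] (f : Ω → ℝ) μ)
    (hy : MemLp (fun ω => (1 - lam ω) * z ω + lam ω * w ω) 2 μ) :
    Submodule.orthogonalProjectionOnto K (hy.toLp _)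
      = (1 - lbar) • Submodule.orthogonalProjectionOnto K (hz.toLp z) :=
  projection_attacked_observation_general (mΩ := mΩ) μ G z w lam lbar hz hw hwmean hber hlmean
    hlam_indep hw_G K hK hy
end

section
/- Let (Ω, F, P) be a probability space and G ⊆ F a sub-σ-algebra. Let g, v be square-integrable real random variables, and let γ be a Bernoulli random variable with mean γ̄ which is independent of the σ-algebra generated by G together with g and v. Let S be a closed linear subspace of L²(Ω, F, P) all of whose elements are G-measurable. Then the orthogonal projection of z := γ g + v onto S equals γ̄ times the orthogonal projection of g onto S plus the orthogonal projection of v onto S. -/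
/-!
Writing `z = γ g + v`, linearity of the projection reduces the claim to `γ g - γ̄ g ⊥ K`, i.e.
`E[u γ g] = γ̄ E[u g]` for every `G`-measurable `u ∈ L²`, which is `E[γ (g u)] = E[γ] E[g u]`
by independence of `γ` from `σ(G, g)`.

The delicate point is that `γ` is only known to be `{0,1}`-valued. On `{g ≠ 0}` the event
`{γ = 1}` is read off from the a.e.-measurable `γ g`, and independence from `{g ≠ 0}` then
forces `μ {γ = 1} + μ {γ = 0} = 1` for the outer measure, which makes `γ` a.e.-measurable unless
`g = 0` a.e., where both sides vanish anyway.
-/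

open MeasureTheory ProbabilityTheory Set

section

variable {Ω : Type*} {G mΩ : MeasurableSpace Ω} {μ : Measure Ω}

theorem MeasureTheory.nullMeasurableSet_of_measure_add_measure_compl [IsFiniteMeasure μ]
    {s : Set Ω} (h : μ s + μ sᶜ = μ univ) : NullMeasurableSet s μ := by
  set T := toMeasurable μ s
  set T' := toMeasurable μ sᶜ
  have hcover : T ∪ T' = univ :=
    eq_univ_of_subset (union_subset_union (subset_toMeasurable μ s) (subset_toMeasurable μ sᶜ))
      (union_compl_self s)
  have hTT' : μ (T ∩ T') = 0 := by
    have h' := measure_union_add_inter (μ := μ) T (measurableSet_toMeasurable μ sᶜ)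
    rw [hcover, measure_toMeasurable, measure_toMeasurable, h] at h'
    exact (ENNReal.add_right_inj (measure_ne_top μ univ)).mp (h'.trans (add_zero _).symm)
  have hs : s = T'ᶜ ∪ (s ∩ T') := by
    rw [← inter_eq_right.2 (compl_subset_comm.2 (subset_toMeasurable μ sᶜ)), union_comm,
      inter_union_compl]
  rw [hs]
  exact (measurableSet_toMeasurable μ sᶜ).compl.nullMeasurableSet.union <| .of_null <|
    measure_mono_null (inter_subset_inter_left _ (subset_toMeasurable μ s)) hTT'

theorem MeasureTheory.L2.inner_toLp_right (u : Lp ℝ 2 μ) {f : Ω → ℝ} (hf : MemLp f 2 μ) :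
    inner ℝ u (hf.toLp f) = ∫ ω, u ω * f ω ∂μ := by
  rw [L2.inner_def]
  refine integral_congr_ae ?_
  filter_upwards [hf.coeFn_toLp] with ω hω
  simp [hω, mul_comm]

theorem aestronglyMeasurable_of_indep_of_aemeasurable_mul [IsProbabilityMeasure μ]
    {γ g : Ω → ℝ} (hγ : ∀ ω, γ ω = 0 ∨ γ ω = 1)
    (hindep : Indep (.comap γ inferInstance) (.comap g inferInstance) μ)
    (hγg : AEMeasurable (fun ω => γ ω * g ω) μ) (hg : ¬ g =ᵐ[μ] 0) :
    AEStronglyMeasurable γ μ := by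
  set A := γ ⁻¹' {1}
  set t := {ω | g ω ≠ 0}
  have hAt : A ∩ t = (fun ω => γ ω * g ω) ⁻¹' {0}ᶜ := by
    ext ω; rcases hγ ω with h | h <;> simp [A, t, h]
  have hAt_null : NullMeasurableSet (A ∩ t) μ :=
    hAt ▸ hγg.nullMeasurable (measurableSet_singleton 0).compl
  have ht : μ t ≠ 0 := by rwa [Filter.EventuallyEq, ae_iff] at hg
  have hAm : MeasurableSet[.comap γ inferInstance] A := ⟨{1}, measurableSet_singleton 1, rfl⟩
  have htm : MeasurableSet[.comap g inferInstance] t :=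
    ⟨{0}ᶜ, (measurableSet_singleton 0).compl, rfl⟩
  have hsplit : μ (A ∩ t) + μ (Aᶜ ∩ t) = μ t := by
    rw [← measure_inter_add_sdiff₀ t hAt_null, inter_comm A t, ← inter_assoc, inter_self,
      sdiff_self_inter, sdiff_eq_compl_inter]
  rw [(Indep_iff _ _ μ).mp hindep A t hAm htm, (Indep_iff _ _ μ).mp hindep Aᶜ t hAm.compl htm,
    ← add_mul] at hsplit
  have hA : NullMeasurableSet A μ := nullMeasurableSet_of_measure_add_measure_compl <| by
    rw [measure_univ]; exact (ENNReal.mul_eq_right ht (measure_ne_top μ t)).mp hsplit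
  have hγA : γ = A.indicator 1 := by
    funext ω; rcases hγ ω with h | h <;> simp [A, h]
  exact hγA ▸ aestronglyMeasurable_const.indicator₀ hA

theorem integral_mul_bernoulli_mul_eq [IsProbabilityMeasure μ] {γ g u : Ω → ℝ}
    (hγ : ∀ ω, γ ω = 0 ∨ γ ω = 1)
    (hindep : Indep (.comap γ inferInstance) (G ⊔ .comap g inferInstance) μ)
    (hg : AEStronglyMeasurable g μ) (hγg : AEStronglyMeasurable (fun ω => γ ω * g ω) μ)
    (hu : AEStronglyMeasurable u μ) (huG : AEStronglyMeasurable[G] u μ) :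
    ∫ ω, u ω * (γ ω * g ω) ∂μ = (∫ ω, γ ω ∂μ) * ∫ ω, u ω * g ω ∂μ := by
  by_cases hg0 : g =ᵐ[μ] 0
  · have h₁ : (fun ω => u ω * (γ ω * g ω)) =ᵐ[μ] 0 := by
      filter_upwards [hg0] with ω hω; simp [hω]
    have h₂ : (fun ω => u ω * g ω) =ᵐ[μ] 0 := by
      filter_upwards [hg0] with ω hω; simp [hω]
    simp [integral_congr_ae h₁, integral_congr_ae h₂]
  have hγm : AEStronglyMeasurable γ μ := aestronglyMeasurable_of_indep_of_aemeasurable_mul hγ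
    (indep_of_indep_of_le_right hindep le_sup_right) hγg.aemeasurable hg0
  obtain ⟨u₀, hu₀, huu₀⟩ := huG
  have hgu₀ : Measurable[G ⊔ .comap g inferInstance] (fun ω => g ω * u₀ ω) :=
    ((comap_measurable g).mono le_sup_right le_rfl).mul (hu₀.measurable.mono le_sup_left le_rfl)
  have hindep' : IndepFun γ (fun ω => g ω * u₀ ω) μ :=
    (IndepFun_iff_Indep _ _ μ).2 (indep_of_indep_of_le_right hindep hgu₀.comap_le)
  calc ∫ ω, u ω * (γ ω * g ω) ∂μ = ∫ ω, γ ω * (g ω * u₀ ω) ∂μ := by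
        refine integral_congr_ae ?_
        filter_upwards [huu₀] with ω hω
        rw [hω]; ring
    _ = (∫ ω, γ ω ∂μ) * ∫ ω, g ω * u₀ ω ∂μ :=
        hindep'.integral_fun_mul_eq_mul_integral hγm (hg.mul (hu.congr huu₀))
    _ = (∫ ω, γ ω ∂μ) * ∫ ω, u ω * g ω ∂μ := by
        congr 1
        refine integral_congr_ae ?_
        filter_upwards [huu₀] with ω hω
        rw [hω, mul_comm]

end

theorem projection_uncertain_measurement_general
    {Ω : Type*} [mΩ : MeasurableSpace Ω] (μ : Measure Ω) [IsProbabilityMeasure μ]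
    (G : MeasurableSpace Ω)
    (g v γ : Ω → ℝ) (γbar : ℝ)
    (hg : MemLp g 2 μ) (hv : MemLp v 2 μ)
    (hber : ∀ ω, γ ω = 0 ∨ γ ω = 1)
    (hγmean : ∫ ω, γ ω ∂μ = γbar)
    (hγ_indep : Indep (MeasurableSpace.comap γ inferInstance)
      (G ⊔ MeasurableSpace.comap g inferInstance ⊔ MeasurableSpace.comap v inferInstance) μ)
    (K : Submodule ℝ (Lp ℝ 2 μ)) [CompleteSpace K]
    (hK : ∀ f ∈ K, AEStronglyMeasurable[G] (f : Ω → ℝ) μ)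
    (hz : MemLp (fun ω => γ ω * g ω + v ω) 2 μ) :
    Submodule.orthogonalProjectionOnto K (hz.toLp _)
      = γbar • Submodule.orthogonalProjectionOnto K (hg.toLp g)
          + Submodule.orthogonalProjectionOnto K (hv.toLp v) := by
  have hφ : MemLp (fun ω => γ ω * g ω) 2 μ := by
    convert hz.sub hv using 1
    funext ω
    simp
  have horth : hφ.toLp _ - γbar • hg.toLp g ∈ Kᗮ := by
    refine (Submodule.mem_orthogonal _ _).2 fun u hu => ?_
    rw [inner_sub_right, inner_smul_right, L2.inner_toLp_right, L2.inner_toLp_right, ← hγmean,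
      integral_mul_bernoulli_mul_eq hber (indep_of_indep_of_le_right hγ_indep le_sup_left)
        hg.1 hφ.1 (Lp.aestronglyMeasurable u) (hK u hu), sub_self]
  have hproj : K.orthogonalProjectionOnto (hφ.toLp _)
      = γbar • K.orthogonalProjectionOnto (hg.toLp g) := by
    rw [← map_smul, ← sub_eq_zero, ← map_sub]
    exact Submodule.orthogonalProjectionOnto_apply_of_mem_orthogonal horth
  rw [← hproj, ← map_add, ← MemLp.toLp_add]
  rfl

/-- Let `G ⊆ F` be a sub-σ-algebra, `g`, `v` square-integrable, and `γ` a Bernoulli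
variable with mean `γ̄` independent of the σ-algebra generated by `G` together with
`g` and `v`. For every closed linear subspace `K` of `L²` all of whose elements are
`G`-measurable, the orthogonal projection of `z = γ g + v` onto `K` equals `γ̄` times
the orthogonal projection of `g` onto `K` plus the orthogonal projection of `v`
onto `K`. -/
theorem projection_uncertain_measurement
    {Ω : Type*} [mΩ : MeasurableSpace Ω] (μ : Measure Ω) [IsProbabilityMeasure μ]
    (G : MeasurableSpace Ω) (hG : G ≤ mΩ)
    (g v γ : Ω → ℝ) (γbar : ℝ)
    (hg : MemLp g 2 μ) (hv : MemLp v 2 μ)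
    (hber : ∀ ω, γ ω = 0 ∨ γ ω = 1)
    (hγmean : ∫ ω, γ ω ∂μ = γbar)
    (hγ_indep : Indep (MeasurableSpace.comap γ inferInstance)
      (G ⊔ MeasurableSpace.comap g inferInstance ⊔ MeasurableSpace.comap v inferInstance) μ)
    (K : Submodule ℝ (Lp ℝ 2 μ)) [CompleteSpace K]
    (hK : ∀ f ∈ K, AEStronglyMeasurable[G] (f : Ω → ℝ) μ)
    (hz : MemLp (fun ω => γ ω * g ω + v ω) 2 μ) :
    Submodule.orthogonalProjectionOnto K (hz.toLp _)
      = γbar • Submodule.orthogonalProjectionOnto K (hg.toLp g)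
          + Submodule.orthogonalProjectionOnto K (hv.toLp v) :=
  projection_uncertain_measurement_general (mΩ := mΩ) μ G g v γ γbar hg hv hber hγmean hγ_indep K hK
    hz
end
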